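/- Let a ∈ (0,∞)^d, b ∈ [0,∞)^d, c ∈ (0,∞)^d satisfy ∑_{i=1}^d (a_i² + b_i²)/c_i − ∑_{i≠j} (a_i b_j − a_j b_i)²/(c_i c_j) > 1. Then the symmetric matrix D = a aᵀ + b bᵀ − diag(c) has exactly one positive eigenvalue. -/

import Mathlib

/-!
Write `A = ∑ aᵢ²/cᵢ`, `B = ∑ bᵢ²/cᵢ`, `T = ∑ aᵢbᵢ/cᵢ` for the Gram matrix `G` of `a, b` in the
inner product weighted by `c⁻¹`. By Lagrange's identity the double sum is `2 det G`, so the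
hypothesis reads `A + B - 2 det G > 1`. The quadratic form of `D` is
`Q x = (a ⬝ x)² + (b ⬝ x)² - ∑ cᵢ xᵢ²`.

On the vectors `x = (αa + βb)/c`, `Q` is the binary form of `G² - G`, whose determinant is
`det G · det (G - 1) < 0` unless `det G = 0`, in which case its trace is positive; either way `Q`
takes a positive value, so `D` has a positive eigenvalue.

Two positive eigenvalues would make `Q` positive definite on a plane. That plane contains some
`x ≠ 0` with `b ⬝ x = 0`, and Cauchy–Schwarz `(a ⬝ x)² = ((a - s b) ⬝ x)² ≤ (A - 2sT + s²B) ∑ cᵢxᵢ²`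
for every `s` then forces `B ≤ det G`. Symmetrically `A ≤ det G`, contradicting the hypothesis.
-/

open Matrix Finset

namespace Matrix.IsHermitian

variable {n : Type*} [Fintype n] [DecidableEq n] {A : Matrix n n ℝ}

theorem exists_eigenvalues_pos_of_dotProduct_mulVec_pos (hA : A.IsHermitian) {x : n → ℝ}
    (hx : 0 < x ⬝ᵥ A *ᵥ x) : ∃ i, 0 < hA.eigenvalues i := by
  by_contra! h
  have hneg : (-A).PosSemidef := by
    refine hA.neg.posSemidef_iff_eigenvalues_nonneg.mpr fun i ↦ ?_
    obtain ⟨j, hj⟩ : -hA.neg.eigenvalues i ∈ Set.range hA.eigenvalues := by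
      rw [← hA.spectrum_real_eq_range_eigenvalues, ← Set.mem_neg, spectrum.neg_eq]
      exact hA.neg.eigenvalues_mem_spectrum_real i
    rw [Pi.zero_apply]
    linarith [h j]
  have hQ := hneg.dotProduct_mulVec_nonneg x
  rw [star_trivial, neg_mulVec, dotProduct_neg] at hQ
  linarith

theorem dotProduct_mulVec_smul_add_smul_eigenvectorBasis (hA : A.IsHermitian) {i j : n}
    (hij : i ≠ j) (σ τ : ℝ) :
    (σ • ⇑(hA.eigenvectorBasis i) + τ • ⇑(hA.eigenvectorBasis j)) ⬝ᵥ
        A *ᵥ (σ • ⇑(hA.eigenvectorBasis i) + τ • ⇑(hA.eigenvectorBasis j)) =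
      hA.eigenvalues i * σ ^ 2 + hA.eigenvalues j * τ ^ 2 := by
  have horth (k l : n) :
      ⇑(hA.eigenvectorBasis k) ⬝ᵥ ⇑(hA.eigenvectorBasis l) = if k = l then 1 else 0 := by
    simpa [EuclideanSpace.inner_eq_star_dotProduct, eq_comm] using
      orthonormal_iff_ite.mp hA.eigenvectorBasis.orthonormal l k
  simp only [mulVec_add, mulVec_smul, mulVec_eigenvectorBasis, add_dotProduct, dotProduct_add,
    smul_dotProduct, dotProduct_smul, horth, hij, hij.symm, if_true, if_false, smul_eq_mul]
  ring

theorem dotProduct_mulVec_smul_add_smul_pos (hA : A.IsHermitian) {i j : n} (hij : i ≠ j)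
    (hi : 0 < hA.eigenvalues i) (hj : 0 < hA.eigenvalues j) (σ τ : ℝ) (hστ : σ ≠ 0 ∨ τ ≠ 0) :
    0 < (σ • ⇑(hA.eigenvectorBasis i) + τ • ⇑(hA.eigenvectorBasis j)) ⬝ᵥ
        A *ᵥ (σ • ⇑(hA.eigenvectorBasis i) + τ • ⇑(hA.eigenvectorBasis j)) := by
  rw [hA.dotProduct_mulVec_smul_add_smul_eigenvectorBasis hij]
  rcases hστ with hσ | hτ
  · exact add_pos_of_pos_of_nonneg (by positivity) (by positivity)
  · exact add_pos_of_nonneg_of_pos (by positivity) (by positivity)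

end Matrix.IsHermitian

theorem coeffs_nonpos_of_forall_binary_quadratic_nonpos {p q r : ℝ}
    (h : ∀ α β : ℝ, p * α ^ 2 + 2 * q * α * β + r * β ^ 2 ≤ 0) :
    p ≤ 0 ∧ r ≤ 0 ∧ q ^ 2 ≤ p * r := by
  refine ⟨by simpa using h 1 0, by simpa using h 0 1, ?_⟩
  have := discrim_le_zero (a := -p) (b := -2 * q) (c := -r) fun s ↦ by nlinarith [h s 1]
  rw [discrim] at this
  linarith

section RankTwo

variable {n : Type*} [Fintype n]

theorem dotProduct_mulVec_vecMulVec_add_vecMulVec_sub_diagonal [DecidableEq n]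
    (a b c x : n → ℝ) :
    x ⬝ᵥ (vecMulVec a a + vecMulVec b b - diagonal c) *ᵥ x =
      (a ⬝ᵥ x) ^ 2 + (b ⬝ᵥ x) ^ 2 - ∑ i, c i * x i ^ 2 := by
  have hdiag : x ⬝ᵥ diagonal c *ᵥ x = ∑ i, c i * x i ^ 2 :=
    sum_congr rfl fun i _ ↦ by rw [mulVec_diagonal]; ring
  simp only [add_mulVec, sub_mulVec, vecMulVec_mulVec, op_smul_eq_smul, dotProduct_add,
    dotProduct_sub, dotProduct_smul, smul_eq_mul, hdiag, dotProduct_comm x a, dotProduct_comm x b]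
  ring

theorem sum_sum_ite_sq_mul_sub_mul_div [DecidableEq n] (a b c : n → ℝ) :
    ∑ i, ∑ j, (if i = j then 0 else (a i * b j - a j * b i) ^ 2 / (c i * c j)) =
      2 * ((∑ i, a i ^ 2 / c i) * (∑ i, b i ^ 2 / c i) - (∑ i, a i * b i / c i) ^ 2) := by
  have hterm (i j : n) : (if i = j then 0 else (a i * b j - a j * b i) ^ 2 / (c i * c j)) =
      a i ^ 2 / c i * (b j ^ 2 / c j) + b i ^ 2 / c i * (a j ^ 2 / c j)
        - 2 * (a i * b i / c i * (a j * b j / c j)) := by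
    split_ifs with h
    · subst h; ring
    · ring
  simp only [hterm, sum_sub_distrib, sum_add_distrib, ← mul_sum, ← sum_mul]
  ring

variable {c : n → ℝ}

theorem sq_sum_mul_div_le_mul (hc : ∀ i, 0 < c i) (a b : n → ℝ) :
    (∑ i, a i * b i / c i) ^ 2 ≤ (∑ i, a i ^ 2 / c i) * ∑ i, b i ^ 2 / c i :=
  sum_sq_le_sum_mul_sum_of_sq_le_mul _ (fun i _ ↦ div_nonneg (sq_nonneg _) (hc i).le)
    (fun i _ ↦ div_nonneg (sq_nonneg _) (hc i).le)
    fun i _ ↦ le_of_eq <| by field_simp [(hc i).ne']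

theorem sq_dotProduct_le_mul_sum (hc : ∀ i, 0 < c i) (f x : n → ℝ) :
    (f ⬝ᵥ x) ^ 2 ≤ (∑ i, f i ^ 2 / c i) * ∑ i, c i * x i ^ 2 :=
  sum_sq_le_sum_mul_sum_of_sq_le_mul _ (fun i _ ↦ div_nonneg (sq_nonneg _) (hc i).le)
    (fun i _ ↦ mul_nonneg (hc i).le (sq_nonneg _))
    fun i _ ↦ le_of_eq <| by field_simp [(hc i).ne']

theorem exists_dotProduct_mulVec_pos [DecidableEq n] {a b : n → ℝ} (hc : ∀ i, 0 < c i)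
    (h : 1 + 2 * ((∑ i, a i ^ 2 / c i) * (∑ i, b i ^ 2 / c i) - (∑ i, a i * b i / c i) ^ 2) <
      ∑ i, a i ^ 2 / c i + ∑ i, b i ^ 2 / c i) :
    ∃ x, 0 < x ⬝ᵥ (vecMulVec a a + vecMulVec b b - diagonal c) *ᵥ x := by
  have hT := sq_sum_mul_div_le_mul hc a b
  set A := ∑ i, a i ^ 2 / c i
  set B := ∑ i, b i ^ 2 / c i
  set T := ∑ i, a i * b i / c i
  by_contra! hQ
  have hform (α β : ℝ) : (A ^ 2 + T ^ 2 - A) * α ^ 2 + 2 * (T * (A + B - 1)) * α * β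
      + (T ^ 2 + B ^ 2 - B) * β ^ 2 ≤ 0 := by
    set x : n → ℝ := (α • a + β • b) / c
    have hax : a ⬝ᵥ x = α * A + β * T := by
      simp only [dotProduct, x, A, T, mul_sum, ← sum_add_distrib]
      exact sum_congr rfl fun i _ ↦ by
        simp only [Pi.div_apply, Pi.add_apply, Pi.smul_apply, smul_eq_mul]; ring
    have hbx : b ⬝ᵥ x = α * T + β * B := by
      simp only [dotProduct, x, B, T, mul_sum, ← sum_add_distrib]
      exact sum_congr rfl fun i _ ↦ by
        simp only [Pi.div_apply, Pi.add_apply, Pi.smul_apply, smul_eq_mul]; ring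
    have hcx : ∑ i, c i * x i ^ 2 = α * (a ⬝ᵥ x) + β * (b ⬝ᵥ x) := by
      simp only [dotProduct, mul_sum, ← sum_add_distrib]
      exact sum_congr rfl fun i _ ↦ by
        simp only [x, Pi.div_apply, Pi.add_apply, Pi.smul_apply, smul_eq_mul]
        field_simp [(hc i).ne']
    have hQx := hQ x
    rw [dotProduct_mulVec_vecMulVec_add_vecMulVec_sub_diagonal, hcx, hax, hbx] at hQx
    linear_combination hQx
  obtain ⟨h₁, h₂, h₃⟩ := coeffs_nonpos_of_forall_binary_quadratic_nonpos hform
  have hdet : (A ^ 2 + T ^ 2 - A) * (T ^ 2 + B ^ 2 - B) - (T * (A + B - 1)) ^ 2 =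
      (A * B - T ^ 2) * ((A * B - T ^ 2) + 1 - (A + B)) := by ring
  nlinarith

theorem sum_sq_div_le_of_dotProduct_eq_zero {a b : n → ℝ} (hc : ∀ i, 0 < c i) {x : n → ℝ}
    (hbx : b ⬝ᵥ x = 0) (hx : ∑ i, c i * x i ^ 2 < (a ⬝ᵥ x) ^ 2) :
    ∑ i, b i ^ 2 / c i ≤
      (∑ i, a i ^ 2 / c i) * (∑ i, b i ^ 2 / c i) - (∑ i, a i * b i / c i) ^ 2 := by
  have hS : 0 ≤ ∑ i, c i * x i ^ 2 := sum_nonneg fun i _ ↦ mul_nonneg (hc i).le (sq_nonneg _)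
  have hq (s : ℝ) : 1 ≤ ∑ i, a i ^ 2 / c i - 2 * s * ∑ i, a i * b i / c i
      + s ^ 2 * ∑ i, b i ^ 2 / c i := by
    have hexp : ∑ i, (a - s • b) i ^ 2 / c i = ∑ i, a i ^ 2 / c i
        - 2 * s * ∑ i, a i * b i / c i + s ^ 2 * ∑ i, b i ^ 2 / c i := by
      simp only [mul_sum, ← sum_sub_distrib, ← sum_add_distrib]
      exact sum_congr rfl fun i _ ↦ by
        simp only [Pi.sub_apply, Pi.smul_apply, smul_eq_mul]; ring
    have hq_nonneg : 0 ≤ ∑ i, (a - s • b) i ^ 2 / c i :=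
      sum_nonneg fun i _ ↦ div_nonneg (sq_nonneg _) (hc i).le
    have hcs := sq_dotProduct_le_mul_sum hc (a - s • b) x
    rw [sub_dotProduct, smul_dotProduct, hbx, smul_zero, sub_zero, hexp] at hcs
    rw [hexp] at hq_nonneg
    nlinarith
  have := discrim_le_zero (a := ∑ i, b i ^ 2 / c i) (b := -2 * ∑ i, a i * b i / c i)
    (c := ∑ i, a i ^ 2 / c i - 1) fun s ↦ by nlinarith [hq s]
  rw [discrim] at this
  linarith

theorem exists_ne_zero_dotProduct_smul_add_smul_eq_zero (f u v : n → ℝ) :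
    ∃ σ τ : ℝ, (σ ≠ 0 ∨ τ ≠ 0) ∧ f ⬝ᵥ (σ • u + τ • v) = 0 := by
  by_cases hu : f ⬝ᵥ u = 0
  · exact ⟨1, 0, Or.inl one_ne_zero, by simp [hu]⟩
  · exact ⟨f ⬝ᵥ v, -(f ⬝ᵥ u), Or.inr (neg_ne_zero.mpr hu), by simp; ring⟩

theorem add_le_two_mul_of_dotProduct_mulVec_pos [DecidableEq n] {a b : n → ℝ}
    (hc : ∀ i, 0 < c i) {u v : n → ℝ}
    (hpos : ∀ σ τ : ℝ, (σ ≠ 0 ∨ τ ≠ 0) → 0 < (σ • u + τ • v) ⬝ᵥ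
      (vecMulVec a a + vecMulVec b b - diagonal c) *ᵥ (σ • u + τ • v)) :
    ∑ i, a i ^ 2 / c i + ∑ i, b i ^ 2 / c i ≤
      2 * ((∑ i, a i ^ 2 / c i) * (∑ i, b i ^ 2 / c i) - (∑ i, a i * b i / c i) ^ 2) := by
  obtain ⟨σ, τ, hστ, hb⟩ := exists_ne_zero_dotProduct_smul_add_smul_eq_zero b u v
  obtain ⟨σ', τ', hστ', ha⟩ := exists_ne_zero_dotProduct_smul_add_smul_eq_zero a u v
  have hB := sum_sq_div_le_of_dotProduct_eq_zero hc hb (by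
    have := hpos σ τ hστ
    rw [dotProduct_mulVec_vecMulVec_add_vecMulVec_sub_diagonal, hb] at this
    linarith)
  have hA := sum_sq_div_le_of_dotProduct_eq_zero hc ha (by
    have := hpos σ' τ' hστ'
    rw [dotProduct_mulVec_vecMulVec_add_vecMulVec_sub_diagonal, ha] at this
    linarith)
  simp only [mul_comm (b _) (a _)] at hA
  linarith

end RankTwo

theorem unique_positive_eigenvalue_rank_two_general {d : ℕ} (a b c : Fin d → ℝ)
    (hc : ∀ i, 0 < c i)
    (hsum : 1 < ∑ i, (a i ^ 2 + b i ^ 2) / c i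
        - ∑ i, ∑ j, if i = j then 0 else (a i * b j - a j * b i) ^ 2 / (c i * c j))
    (hD : (Matrix.vecMulVec a a + Matrix.vecMulVec b b - Matrix.diagonal c).IsHermitian) :
    (Finset.univ.filter fun i => 0 < hD.eigenvalues i).card = 1 := by
  simp only [add_div, sum_add_distrib, sum_sum_ite_sq_mul_sub_mul_div] at hsum
  obtain ⟨x, hx⟩ := exists_dotProduct_mulVec_pos (a := a) (b := b) hc (by linarith)
  obtain ⟨i, hi⟩ := hD.exists_eigenvalues_pos_of_dotProduct_mulVec_pos hx
  refine card_eq_one.mpr ⟨i, eq_singleton_iff_unique_mem.mpr ⟨by simpa using hi, fun j hj ↦ ?_⟩⟩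
  by_contra hji
  have := add_le_two_mul_of_dotProduct_mulVec_pos hc
    (hD.dotProduct_mulVec_smul_add_smul_pos hji (mem_filter.mp hj).2 hi)
  linarith

theorem unique_positive_eigenvalue_rank_two {d : ℕ} (a b c : Fin d → ℝ)
    (ha : ∀ i, 0 < a i) (hb : ∀ i, 0 ≤ b i) (hc : ∀ i, 0 < c i)
    (hsum : 1 < ∑ i, (a i ^ 2 + b i ^ 2) / c i
        - ∑ i, ∑ j, if i = j then 0 else (a i * b j - a j * b i) ^ 2 / (c i * c j))
    (hD : (Matrix.vecMulVec a a + Matrix.vecMulVec b b - Matrix.diagonal c).IsHermitian) :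
    (Finset.univ.filter fun i => 0 < hD.eigenvalues i).card = 1 :=
  unique_positive_eigenvalue_rank_two_general a b c hc hsum hD
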